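/- arXiv:1102.3932 — 2 statements merged into one kernel-verified Lean document; each statement's English description precedes it below -/
import Mathlib

section
/- Let P = {p₀, p₁, p₂, p₃, p₄} with p₀ = ε, p₁ = 0, p₂ = 00, p₃ = 1, p₄ = 11. For every infinite binary overlap-free word x and every n ≥ 1, there exist indices i₁, …, iₙ ∈ {0,1,2,3,4} and an infinite binary overlap-free word y such that x = p_{i₁}·μ(p_{i₂}·μ(p_{i₃}·μ(⋯ p_{iₙ}·μ(y) ⋯))); moreover the indices i₁, …, iₙ and the word y are uniquely determined by x and n. -/
/-!
An overlap-free binary word has no cube `aaa` and no alternating factor `ababa`, so it has a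
square `aa` at some position `≥ 1`, and two such squares are always an even distance apart:
distance 1 gives a cube, distance 3 (with no square in between) the overlap `baabaab`, and
distance `≥ 5` an alternating factor of length 5. Hence, after a prefix of length 0, 1 or 2,
the word splits into pairs `ab` with `a ≠ b`, i.e. `x = p · μ(y)`, and `y` is overlap-free since
`μ` maps an overlap `aXaXa` to an overlap followed by one letter. The length of `p` is forced by
the parity of the squares and by whether `x 0 = x 1`; then `p` and `y` are read off from `x`.
Iterating this decomposition proves the theorem.
-/

/-- An overlap: a word of the form a x a x a, with `a` a single letter. -/
def Overlap (w : List (Fin 2)) : Prop :=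
  ∃ (a : Fin 2) (x : List (Fin 2)), w = [a] ++ x ++ [a] ++ x ++ [a]

/-- `w` occurs as a (contiguous) factor of the infinite word `x`. -/
def FactorOf (w : List (Fin 2)) (x : ℕ → Fin 2) : Prop :=
  ∃ i, w = (List.range w.length).map (fun j => x (i + j))

/-- An infinite binary word is overlap-free if no finite factor is an overlap. -/
def OverlapFree (x : ℕ → Fin 2) : Prop :=
  ∀ w, FactorOf w x → ¬ Overlap w

/-- The Thue–Morse morphism applied to an infinite word. -/
def mu (x : ℕ → Fin 2) : ℕ → Fin 2 :=
  fun n => if n % 2 = 0 then x (n / 2) else 1 - x (n / 2)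

/-- Prepend a finite word to an infinite word. -/
def prepend (p : List (Fin 2)) (w : ℕ → Fin 2) : ℕ → Fin 2 :=
  fun n => if h : n < p.length then p.get ⟨n, h⟩ else w (n - p.length)

/-- `x` begins with the finite word `p`. -/
def BeginsWith (x : ℕ → Fin 2) (p : List (Fin 2)) : Prop :=
  ∀ i < p.length, x i = p.getD i 0

/-- The five prefix words p₀ = ε, p₁ = 0, p₂ = 00, p₃ = 1, p₄ = 11. -/
def pword : Fin 5 → List (Fin 2)
  | 0 => []
  | 1 => [0]
  | 2 => [0, 0]
  | 3 => [1]
  | 4 => [1, 1]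

/-- `nest [i₁, …, iₙ] y = p_{i₁} μ(p_{i₂} μ(⋯ p_{iₙ} μ(y) ⋯))`. -/
def nest : List (Fin 5) → (ℕ → Fin 2) → (ℕ → Fin 2)
  | [], y => y
  | i :: r, y => prepend (pword i) (mu (nest r y))

theorem fin_two_eq_of_ne_of_ne {a b c : Fin 2} : a ≠ b → b ≠ c → a = c := by
  revert a b c; decide

theorem fin_two_ne_iff_eq_one_sub {a b : Fin 2} : a ≠ b ↔ b = 1 - a := by
  revert a b; decide

def factorAt (x : ℕ → Fin 2) (i n : ℕ) : List (Fin 2) :=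
  (List.range n).map fun j => x (i + j)

@[simp]
theorem length_factorAt (x : ℕ → Fin 2) (i n : ℕ) : (factorAt x i n).length = n := by
  simp [factorAt]

theorem factorAt_add (x : ℕ → Fin 2) (i m n : ℕ) :
    factorAt x i (m + n) = factorAt x i m ++ factorAt x (i + m) n := by
  simp [factorAt, List.range_add, Function.comp_def, Nat.add_assoc]

theorem OverlapFree.not_overlap_factorAt {x : ℕ → Fin 2} (hx : OverlapFree x) (i n : ℕ) :
    ¬ Overlap (factorAt x i n) :=
  hx _ ⟨i, by rw [length_factorAt]; rfl⟩

theorem OverlapFree.shift {x : ℕ → Fin 2} (hx : OverlapFree x) (k : ℕ) :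
    OverlapFree fun n => x (k + n) := by
  rintro w ⟨i, hw⟩
  rw [hw]
  simpa [factorAt, Nat.add_assoc] using hx.not_overlap_factorAt (k + i) w.length

theorem OverlapFree.not_cube {x : ℕ → Fin 2} (hx : OverlapFree x) {i : ℕ}
    (h₁ : x i = x (i + 1)) (h₂ : x (i + 1) = x (i + 2)) : False :=
  hx.not_overlap_factorAt i 3 ⟨x i, [], by simp [factorAt, List.range_succ, h₁, h₂]⟩

theorem OverlapFree.exists_square_lt_four {x : ℕ → Fin 2} (hx : OverlapFree x) (i : ℕ) :
    ∃ j < 4, x (i + j) = x (i + j + 1) := by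
  by_contra! h
  have e₂ : x (i + 2) = x i :=
    (fin_two_eq_of_ne_of_ne (h 0 (by norm_num)) (h 1 (by norm_num))).symm
  have e₃ : x (i + 3) = x (i + 1) :=
    (fin_two_eq_of_ne_of_ne (h 1 (by norm_num)) (h 2 (by norm_num))).symm
  have e₄ : x (i + 4) = x i :=
    (fin_two_eq_of_ne_of_ne (h 2 (by norm_num)) (h 3 (by norm_num))).symm.trans e₂
  exact hx.not_overlap_factorAt i 5
    ⟨x i, [x (i + 1)], by simp [factorAt, List.range_succ, e₂, e₃, e₄]⟩

theorem OverlapFree.exists_square {x : ℕ → Fin 2} (hx : OverlapFree x) :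
    ∃ d, 1 ≤ d ∧ x d = x (d + 1) := by
  obtain ⟨j, -, hj⟩ := hx.exists_square_lt_four 1
  exact ⟨1 + j, by omega, hj⟩

theorem OverlapFree.not_squares_at_distance_three {x : ℕ → Fin 2} (hx : OverlapFree x) {p : ℕ}
    (h₁ : x (p + 1) = x (p + 2)) (h₂ : x (p + 2) ≠ x (p + 3)) (h₃ : x (p + 3) ≠ x (p + 4))
    (h₄ : x (p + 4) = x (p + 5)) : False := by
  have h₀ : x p ≠ x (p + 1) := fun h => hx.not_cube h h₁
  have h₅ : x (p + 5) ≠ x (p + 6) := fun h => hx.not_cube h₄ h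
  have e₃ : x (p + 3) = x p := (fin_two_eq_of_ne_of_ne (h₀.trans_eq h₁) h₂).symm
  have e₄ : x (p + 4) = x (p + 1) := (fin_two_eq_of_ne_of_ne (h₁.trans_ne h₂) h₃).symm
  have e₅ : x (p + 5) = x (p + 2) := h₄.symm.trans (e₄.trans h₁)
  have e₆ : x (p + 6) = x (p + 3) := (fin_two_eq_of_ne_of_ne (h₃.trans_eq h₄) h₅).symm
  exact hx.not_overlap_factorAt p 7
    ⟨x p, [x (p + 1), x (p + 2)], by simp [factorAt, List.range_succ, e₃, e₄, e₅, e₆]⟩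

theorem OverlapFree.even_of_consecutive_squares {x : ℕ → Fin 2} (hx : OverlapFree x) {j g : ℕ}
    (hj : 1 ≤ j) (hsj : x j = x (j + 1)) (hsg : x (j + g) = x (j + g + 1))
    (hbetween : ∀ m, 0 < m → m < g → x (j + m) ≠ x (j + m + 1)) : Even g := by
  by_contra hodd
  obtain ⟨p, rfl⟩ : ∃ p, j = p + 1 := ⟨j - 1, by omega⟩
  obtain rfl | rfl | hg : g = 1 ∨ g = 3 ∨ 5 ≤ g := by
    obtain ⟨k, rfl⟩ := Nat.not_even_iff_odd.1 hodd; omega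
  · exact hx.not_cube hsj hsg
  · exact hx.not_squares_at_distance_three hsj (hbetween 1 (by norm_num) (by norm_num))
      (hbetween 2 (by norm_num) (by norm_num)) hsg
  · obtain ⟨m, hm, hsm⟩ := hx.exists_square_lt_four (p + 2)
    exact hbetween (m + 1) (by omega) (by omega) (by convert hsm using 2 <;> omega)

theorem OverlapFree.even_of_squares {x : ℕ → Fin 2} (hx : OverlapFree x) {j g : ℕ}
    (hj : 1 ≤ j) (hsj : x j = x (j + 1)) (hsg : x (j + g) = x (j + g + 1)) : Even g := by
  induction g using Nat.strong_induction_on generalizing j with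
  | _ g ih =>
    by_cases hm : ∃ m, 0 < m ∧ m < g ∧ x (j + m) = x (j + m + 1)
    · obtain ⟨m, hm₀, hmg, hsm⟩ := hm
      have hg : m + (g - m) = g := Nat.add_sub_cancel' hmg.le
      have := (ih m hmg hj hsj hsm).add
        (ih (g - m) (by omega) (by omega) hsm (by rwa [Nat.add_assoc, hg]))
      rwa [hg] at this
    · exact hx.even_of_consecutive_squares hj hsj hsg fun m hm₀ hmg hsm =>
        hm ⟨m, hm₀, hmg, hsm⟩

theorem OverlapFree.mod_two_eq_of_squares {x : ℕ → Fin 2} (hx : OverlapFree x) {j l : ℕ}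
    (hj : 1 ≤ j) (hl : 1 ≤ l) (hsj : x j = x (j + 1)) (hsl : x l = x (l + 1)) :
    j % 2 = l % 2 := by
  wlog h : j ≤ l
  · exact (this hx hl hj hsl hsj (by omega)).symm
  obtain ⟨g, rfl⟩ := Nat.exists_eq_add_of_le h
  have := Nat.even_iff.1 (hx.even_of_squares hj hsj hsl)
  omega

def muWord (w : List (Fin 2)) : List (Fin 2) :=
  w.flatMap fun a => [a, 1 - a]

@[simp]
theorem mu_two_mul (y : ℕ → Fin 2) (m : ℕ) : mu y (2 * m) = y m := by
  simp [mu]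

@[simp]
theorem mu_two_mul_add_one (y : ℕ → Fin 2) (m : ℕ) : mu y (2 * m + 1) = 1 - y m := by
  simp [mu, Nat.add_mod, Nat.add_div]

theorem factorAt_mu (y : ℕ → Fin 2) (i n : ℕ) :
    factorAt (mu y) (2 * i) (2 * n) = muWord (factorAt y i n) := by
  induction n with
  | zero => rfl
  | succ n ih =>
    rw [Nat.mul_succ, factorAt_add, ih, factorAt_add, muWord, muWord, List.flatMap_append,
      ← Nat.mul_add]
    simp [factorAt, List.range_succ]

theorem OverlapFree.of_mu {y : ℕ → Fin 2} (hy : OverlapFree (mu y)) : OverlapFree y := by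
  rintro w ⟨i, hw⟩ ⟨a, X, hwX⟩
  have hlen : 2 * w.length = (2 * w.length - 1) + 1 := by
    have : 0 < w.length := by simp [hwX]
    omega
  -- `μ(a X a X a)` is `a X' a X' a (1 - a)` with `X' = (1 - a) μ(X)`
  have hsplit : factorAt (mu y) (2 * i) (2 * w.length - 1) ++
      factorAt (mu y) (2 * i + (2 * w.length - 1)) 1 =
      ([a] ++ ((1 - a) :: muWord X) ++ [a] ++ ((1 - a) :: muWord X) ++ [a]) ++ [1 - a] := by
    rw [← factorAt_add, ← hlen, factorAt_mu, show factorAt y i w.length = w from hw.symm, hwX]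
    simp [muWord]
  exact hy.not_overlap_factorAt _ _ ⟨a, _, List.append_inj_left' hsplit (by simp)⟩

def IsMuImageFrom (x : ℕ → Fin 2) (k : ℕ) : Prop :=
  ∀ m, x (k + 2 * m) ≠ x (k + 2 * m + 1)

theorem IsMuImageFrom.ne {x : ℕ → Fin 2} {k d : ℕ} (h : IsMuImageFrom x k) (hkd : k ≤ d)
    (hd : d % 2 = k % 2) : x d ≠ x (d + 1) := by
  obtain ⟨m, rfl⟩ : ∃ m, d = k + 2 * m := ⟨(d - k) / 2, by omega⟩
  exact h m

theorem shift_eq_mu_iff {x y : ℕ → Fin 2} {k : ℕ} :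
    (fun n => x (k + n)) = mu y ↔ IsMuImageFrom x k ∧ y = fun m => x (k + 2 * m) := by
  constructor
  · intro h
    have hx (n : ℕ) : x (k + n) = mu y n := congrFun h n
    refine ⟨fun m => ?_, funext fun m => by rw [hx, mu_two_mul]⟩
    rw [hx, Nat.add_assoc, hx, mu_two_mul, mu_two_mul_add_one]
    exact fin_two_ne_iff_eq_one_sub.2 rfl
  · rintro ⟨h, rfl⟩
    funext n
    obtain ⟨m, rfl | rfl⟩ := Nat.even_or_odd' n
    · rw [mu_two_mul]
    · rw [mu_two_mul_add_one, ← Nat.add_assoc]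
      exact fin_two_ne_iff_eq_one_sub.1 (h m)

theorem OverlapFree.decimation {x : ℕ → Fin 2} (hx : OverlapFree x) {k : ℕ}
    (h : IsMuImageFrom x k) : OverlapFree fun m => x (k + 2 * m) := by
  have := hx.shift k
  rw [shift_eq_mu_iff.2 ⟨h, rfl⟩] at this
  exact this.of_mu

theorem eq_prepend_iff {x w : ℕ → Fin 2} {p : List (Fin 2)} :
    x = prepend p w ↔ BeginsWith x p ∧ (fun n => x (p.length + n)) = w := by
  constructor
  · rintro rfl
    exact ⟨fun i hi => by simp [prepend, hi], funext fun n => by simp [prepend]⟩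
  · rintro ⟨hp, rfl⟩
    funext n
    by_cases hn : n < p.length
    · simp [prepend, hn, hp n hn]
    · simp only [prepend, hn, dite_false]
      congr 1
      omega

theorem eq_prepend_mu_iff {x y : ℕ → Fin 2} {p : List (Fin 2)} :
    x = prepend p (mu y) ↔
      BeginsWith x p ∧ IsMuImageFrom x p.length ∧ y = fun m => x (p.length + 2 * m) := by
  rw [eq_prepend_iff, shift_eq_mu_iff]

theorem length_pword_le_two (i : Fin 5) : (pword i).length ≤ 2 := by
  fin_cases i <;> decide

theorem pword_injective : Function.Injective pword := by
  decide

theorem BeginsWith.eq_factorAt {x : ℕ → Fin 2} {p : List (Fin 2)} (h : BeginsWith x p) :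
    p = factorAt x 0 p.length :=
  List.ext_getElem (by simp) fun i hi _ => by simp [factorAt, h i hi, hi]

theorem BeginsWith.pword_eq {x : ℕ → Fin 2} {i j : Fin 5} (hi : BeginsWith x (pword i))
    (hj : BeginsWith x (pword j)) (hlen : (pword i).length = (pword j).length) : i = j :=
  pword_injective <| hi.eq_factorAt.trans (hlen ▸ hj.eq_factorAt.symm)

theorem BeginsWith.eq_of_length_pword_eq_two {x : ℕ → Fin 2} {i : Fin 5}
    (h : BeginsWith x (pword i)) (hi : (pword i).length = 2) : x 0 = x 1 := by
  have h₀ := h 0 (by omega)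
  have h₁ := h 1 (by omega)
  fin_cases i <;> simp_all [pword]

theorem exists_pword_beginsWith (x : ℕ → Fin 2) {k : ℕ}
    (hk : k ≤ 1 ∨ k = 2 ∧ x 0 = x 1) :
    ∃ i, (pword i).length = k ∧ BeginsWith x (pword i) := by
  obtain rfl | rfl | ⟨rfl, h₀₁⟩ : k = 0 ∨ k = 1 ∨ k = 2 ∧ x 0 = x 1 := by omega
  · exact ⟨0, rfl, fun j hj => by simp [pword] at hj⟩
  · obtain h | h : x 0 = 0 ∨ x 0 = 1 := by omega
    · exact ⟨1, rfl, fun j hj => by simp_all [pword]⟩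
    · exact ⟨3, rfl, fun j hj => by simp_all [pword]⟩
  · obtain h | h : x 0 = 0 ∨ x 0 = 1 := by omega
    · refine ⟨2, rfl, fun j hj => ?_⟩
      simp only [pword, List.length_cons, List.length_nil] at hj
      interval_cases j <;> simp [pword, h, ← h₀₁]
    · refine ⟨4, rfl, fun j hj => ?_⟩
      simp only [pword, List.length_cons, List.length_nil] at hj
      interval_cases j <;> simp [pword, h, ← h₀₁]

theorem OverlapFree.exists_pword_isMuImageFrom {x : ℕ → Fin 2} (hx : OverlapFree x) :
    ∃ i, BeginsWith x (pword i) ∧ IsMuImageFrom x (pword i).length := by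
  obtain ⟨d, hd, hsd⟩ := hx.exists_square
  have parse (k : ℕ) (h₀ : k = 0 → x 0 ≠ x 1) (hkd : k % 2 ≠ d % 2) :
      IsMuImageFrom x k := by
    intro m hsm
    rcases Nat.eq_zero_or_pos (k + 2 * m) with hkm | hkm
    · obtain ⟨rfl, rfl⟩ : k = 0 ∧ m = 0 := by omega
      exact h₀ rfl hsm
    · have := hx.mod_two_eq_of_squares hkm hd hsm hsd
      omega
  obtain ⟨k, hk, h₀, hkd⟩ :
      ∃ k, (k ≤ 1 ∨ k = 2 ∧ x 0 = x 1) ∧ (k = 0 → x 0 ≠ x 1) ∧ k % 2 ≠ d % 2 := by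
    rcases Nat.mod_two_eq_zero_or_one d with hd₂ | hd₂
    · exact ⟨1, by omega, by omega, by omega⟩
    · by_cases h₀₁ : x 0 = x 1
      · exact ⟨2, Or.inr ⟨rfl, h₀₁⟩, by omega, by omega⟩
      · exact ⟨0, by omega, fun _ => h₀₁, by omega⟩
  obtain ⟨i, rfl, hi⟩ := exists_pword_beginsWith x hk
  exact ⟨i, hi, parse _ h₀ hkd⟩

theorem OverlapFree.pword_unique {x : ℕ → Fin 2} (hx : OverlapFree x) {i j : Fin 5}
    (hi : BeginsWith x (pword i)) (hi' : IsMuImageFrom x (pword i).length)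
    (hj : BeginsWith x (pword j)) (hj' : IsMuImageFrom x (pword j).length) : i = j := by
  refine hi.pword_eq hj ?_
  have hi₂ := length_pword_le_two i
  have hj₂ := length_pword_le_two j
  obtain ⟨d, hd, hsd⟩ := hx.exists_square
  -- a length of the parity of `d` would make the square at `d` one of the pairs `ab`, `a ≠ b`
  have hpar : (pword i).length % 2 = (pword j).length % 2 := by
    by_contra
    rcases (by omega : (pword i).length % 2 = d % 2 ∨ (pword j).length % 2 = d % 2) with h | h
    · exact hi'.ne (by omega) h.symm hsd
    · exact hj'.ne (by omega) h.symm hsd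
  by_contra
  rcases (by omega : (pword i).length = 0 ∧ (pword j).length = 2 ∨
      (pword i).length = 2 ∧ (pword j).length = 0) with ⟨h₀, h₂⟩ | ⟨h₂, h₀⟩
  · exact (h₀ ▸ hi') 0 (hj.eq_of_length_pword_eq_two h₂)
  · exact (h₀ ▸ hj') 0 (hi.eq_of_length_pword_eq_two h₂)

theorem OverlapFree.exists_unique_prepend_mu {x : ℕ → Fin 2} (hx : OverlapFree x) :
    ∃ i y, OverlapFree y ∧ x = prepend (pword i) (mu y) ∧
      ∀ i' y', x = prepend (pword i') (mu y') → i = i' ∧ y = y' := by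
  obtain ⟨i, hi, hi'⟩ := hx.exists_pword_isMuImageFrom
  refine ⟨i, _, hx.decimation hi', eq_prepend_mu_iff.2 ⟨hi, hi', rfl⟩, fun i' y' h => ?_⟩
  obtain ⟨hj, hj', rfl⟩ := eq_prepend_mu_iff.1 h
  obtain rfl := hx.pword_unique hi hi' hj hj'
  exact ⟨rfl, rfl⟩

theorem iterated_restivo_salemi_general (x : ℕ → Fin 2) (hx : OverlapFree x)
    (n : ℕ) :
    ∃ (l : List (Fin 5)) (y : ℕ → Fin 2),
      l.length = n ∧ OverlapFree y ∧ x = nest l y ∧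
      ∀ (l' : List (Fin 5)) (y' : ℕ → Fin 2),
        l'.length = n → OverlapFree y' → x = nest l' y' → l = l' ∧ y = y' := by
  induction n generalizing x with
  | zero =>
    refine ⟨[], x, rfl, hx, rfl, fun l' y' hl' _ h => ?_⟩
    obtain rfl := List.length_eq_zero_iff.1 hl'
    exact ⟨rfl, h⟩
  | succ n ih =>
    obtain ⟨i, z, hz, hxz, hiz⟩ := hx.exists_unique_prepend_mu
    obtain ⟨l, y, hl, hy, hzy, hly⟩ := ih z hz
    refine ⟨i :: l, y, by simp [hl], hy, by rw [hxz, hzy]; rfl, ?_⟩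
    rintro (_ | ⟨i', l'⟩) y' hl' hy' h
    · simp at hl'
    · obtain ⟨rfl, hz'⟩ := hiz i' (nest l' y') h
      obtain ⟨rfl, rfl⟩ := hly l' y' (by simpa using hl') hy' hz'
      exact ⟨rfl, rfl⟩

theorem iterated_restivo_salemi (x : ℕ → Fin 2) (hx : OverlapFree x)
    (n : ℕ) (hn : 1 ≤ n) :
    ∃ (l : List (Fin 5)) (y : ℕ → Fin 2),
      l.length = n ∧ OverlapFree y ∧ x = nest l y ∧
      ∀ (l' : List (Fin 5)) (y' : ℕ → Fin 2),
        l'.length = n → OverlapFree y' → x = nest l' y' → l = l' ∧ y = y' :=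
  iterated_restivo_salemi_general x hx n
end

section
/- For every infinite binary word x, the following are equivalent: (i) 1·μ(x) is overlap-free and μ(x) begins with 0; (ii) 0·x is overlap-free and x begins with 0. -/
/-!
Read an overlap as a block `y s ⋯ y (s + 2p)` with period `p > 0`. Since `μ(0·x) = 0 1 μ(x)`,
the word `1·μ(x)` is `μ(0·x)` without its first letter, so it suffices to show that the tail of
`μ(y)` is overlap-free exactly when `y` is. An overlap of period `p` at `s` in `y` gives one of
period `2p` at `2s + 1` in `μ(y)`. Conversely, an overlap at `s` in `u = μ(y)` has even period:
the letters `u (2n)` and `u (2n + 1)` differ, and an odd period `p` transports this to all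
consecutive letters of `u s ⋯ u (s + p)`, which then alternates, contradicting `u s = u (s + p)`.
An overlap of period `2q` at `s` in `μ(y)` then projects to one of period `q` at `s / 2` in `y`.
-/

/-- The factor `y s ⋯ y (s + 2p)` is an overlap `a x a x a` with `|a x| = p`. -/
def IsOverlapAt (y : ℕ → Fin 2) (s p : ℕ) : Prop :=
  0 < p ∧ ∀ i ≤ p, y (s + i) = y (s + i + p)

lemma map_range_add {α : Type*} (f : ℕ → α) (a b : ℕ) :
    (List.range (a + b)).map f =
      (List.range a).map f ++ (List.range b).map (fun j => f (a + j)) := by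
  rw [List.range_add, List.map_append, List.map_map]
  rfl

lemma overlap_map_range_iff (f : ℕ → Fin 2) (n : ℕ) :
    Overlap ((List.range n).map f) ↔ ∃ p, 0 < p ∧ n = 2 * p + 1 ∧ ∀ k ≤ p, f k = f (k + p) := by
  constructor
  · rintro ⟨a, x, hw⟩
    have hn : n = 2 * (x.length + 1) + 1 := by
      simpa [two_mul, add_assoc, add_comm, add_left_comm] using congrArg List.length hw
    refine ⟨x.length + 1, by omega, hn, fun k hk => ?_⟩
    have hsplit : [a] ++ x ++ [a] ++ x ++ [a] = (a :: x) ++ ((a :: x) ++ [a]) := by simp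
    have hget : ∀ m < n, f m = ((a :: x) ++ ((a :: x) ++ [a]))[m]?.getD 0 := fun m hm => by
      rw [← hsplit, ← hw]
      simp [hm]
    rw [hget k (by omega), hget _ (by omega)]
    simp only [List.getElem?_append, List.length_cons, Nat.add_sub_cancel,
      if_neg (show ¬ k + (x.length + 1) < x.length + 1 by omega)]
    rcases hk.lt_or_eq with hk | rfl
    · simp [hk]
    · simp
  · rintro ⟨p, hp, rfl, hf⟩
    obtain ⟨q, rfl⟩ : ∃ q, p = q + 1 := ⟨p - 1, by omega⟩
    refine ⟨f 0, (List.range q).map (fun j => f (j + 1)), ?_⟩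
    have hhead : (List.range (q + 1)).map f =
        [f 0] ++ (List.range q).map (fun j => f (j + 1)) := by
      rw [List.range_succ_eq_map, List.map_cons, List.map_map]
      rfl
    have hrepeat : (List.range (q + 1)).map (fun j => f (q + 1 + j)) =
        (List.range (q + 1)).map f :=
      List.map_congr_left fun j hj => by
        rw [add_comm, ← hf j (by simp at hj; omega)]
    have hlast : f (q + 1 + (q + 1)) = f 0 := by
      rw [← hf (q + 1) le_rfl, hf 0 (by omega), zero_add]
    rw [two_mul, map_range_add, map_range_add, hrepeat, hhead]
    simp [hlast]

lemma overlapFree_iff_forall_not_isOverlapAt (y : ℕ → Fin 2) :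
    OverlapFree y ↔ ∀ s p, ¬ IsOverlapAt y s p := by
  constructor
  · rintro h s p ⟨hp, hper⟩
    refine h ((List.range (2 * p + 1)).map fun j => y (s + j)) ⟨s, by simp⟩
      ((overlap_map_range_iff _ _).2 ⟨p, hp, rfl, fun k hk => ?_⟩)
    simpa [add_assoc] using hper k hk
  · rintro h w ⟨s, hw⟩ hov
    rw [hw] at hov
    obtain ⟨p, hp, -, hper⟩ := (overlap_map_range_iff _ _).1 hov
    exact h s p ⟨hp, fun i hi => by simpa [add_assoc] using hper i hi⟩

lemma isOverlapAt_tail_iff (y : ℕ → Fin 2) (s p : ℕ) :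
    IsOverlapAt (fun n => y (n + 1)) s p ↔ IsOverlapAt y (s + 1) p := by
  simp only [IsOverlapAt, add_right_comm _ 1]

lemma mu_zero (x : ℕ → Fin 2) : mu x 0 = x 0 := by
  simp [mu]

lemma mu_eq_mu_iff (y : ℕ → Fin 2) {m n : ℕ} (h : m % 2 = n % 2) :
    mu y m = mu y n ↔ y (m / 2) = y (n / 2) := by
  unfold mu
  rw [h]
  split_ifs <;> simp

lemma mu_add_one_ne (y : ℕ → Fin 2) {n : ℕ} (hn : Even n) : mu y (n + 1) ≠ mu y n := by
  obtain ⟨k, rfl⟩ := hn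
  unfold mu
  rw [if_neg (by omega), if_pos (by omega), show (k + k + 1) / 2 = (k + k) / 2 by omega]
  generalize y ((k + k) / 2) = a
  revert a
  decide

lemma prepend_one_sub_mu (a : Fin 2) (x : ℕ → Fin 2) :
    prepend [1 - a] (mu x) = fun n => mu (prepend [a] x) (n + 1) := by
  funext n
  rcases n with _ | n
  · simp [prepend, mu]
  · simp only [prepend, mu]
    simp [show (n + 1 + 1) % 2 = n % 2 by omega, show (n + 1 + 1) / 2 - 1 = n / 2 by omega]

lemma IsOverlapAt.map_mu {y : ℕ → Fin 2} {s p : ℕ} (h : IsOverlapAt y s p) :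
    IsOverlapAt (mu y) (2 * s + 1) (2 * p) := by
  refine ⟨by linarith [h.1], fun i hi => ?_⟩
  rw [mu_eq_mu_iff y (by omega), show (2 * s + 1 + i) / 2 = s + (i + 1) / 2 by omega,
    show (2 * s + 1 + i + 2 * p) / 2 = s + (i + 1) / 2 + p by omega]
  exact h.2 _ (by omega)

lemma IsOverlapAt.of_mu {y : ℕ → Fin 2} {s q : ℕ} (h : IsOverlapAt (mu y) s (2 * q)) :
    IsOverlapAt y (s / 2) q := by
  refine ⟨by linarith [h.1], fun i hi => ?_⟩
  have := h.2 (2 * i) (by omega)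
  rwa [mu_eq_mu_iff y (by omega), show (s + 2 * i) / 2 = s / 2 + i by omega,
    show (s + 2 * i + 2 * q) / 2 = s / 2 + i + q by omega] at this

lemma IsOverlapAt.even_period {u : ℕ → Fin 2} (hu : ∀ n, Even n → u (n + 1) ≠ u n) {s p : ℕ}
    (h : IsOverlapAt u s p) : Even p := by
  by_contra hodd
  rw [Nat.not_even_iff_odd] at hodd
  obtain ⟨hp, hper⟩ := h
  have hstep : ∀ k < p, u (s + k + 1) ≠ u (s + k) := by
    intro k hk
    rcases Nat.even_or_odd (s + k) with he | ho
    · exact hu _ he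
    · -- the odd period `p` moves the pair to the aligned pair at the even position `s + k + p`
      rw [hper k hk.le, show s + k + 1 = s + (k + 1) from rfl, hper (k + 1) hk,
        show s + (k + 1) + p = s + k + p + 1 by omega]
      exact hu _ (ho.add_odd hodd)
  have halternate : ∀ k ≤ p, (u (s + k) = u s ↔ Even k) := by
    have hbin : ∀ a b c : Fin 2, a ≠ b → (a = c ↔ ¬ b = c) := by decide
    intro k
    induction k with
    | zero => simp
    | succ k ih =>
      intro hk
      rw [Nat.even_add_one, ← ih (by omega), ← add_assoc]
      exact hbin _ _ _ (hstep k hk)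
  have hperiod : u (s + p) = u s := by simpa using (hper 0 hp.le).symm
  exact Nat.not_even_iff_odd.2 hodd ((halternate p le_rfl).1 hperiod)

lemma overlapFree_mu_tail_iff (y : ℕ → Fin 2) :
    OverlapFree (fun n => mu y (n + 1)) ↔ OverlapFree y := by
  simp only [overlapFree_iff_forall_not_isOverlapAt, isOverlapAt_tail_iff]
  constructor
  · intro h s p hov
    exact h (2 * s) (2 * p) hov.map_mu
  · intro h s p hov
    obtain ⟨q, rfl⟩ := even_iff_two_dvd.1 (hov.even_period fun n => mu_add_one_ne y)
    exact h ((s + 1) / 2) q hov.of_mu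

lemma beginsWith_singleton (y : ℕ → Fin 2) (a : Fin 2) : BeginsWith y [a] ↔ y 0 = a := by
  simp [BeginsWith]

theorem one_mu_begins_0_iff (x : ℕ → Fin 2) :
    (OverlapFree (prepend [1] (mu x)) ∧ BeginsWith (mu x) [0]) ↔
      (OverlapFree (prepend [0] x) ∧ BeginsWith x [0]) := by
  have hshift : prepend [1] (mu x) = fun n => mu (prepend [0] x) (n + 1) := by
    simpa using prepend_one_sub_mu 0 x
  rw [hshift, overlapFree_mu_tail_iff, beginsWith_singleton, beginsWith_singleton, mu_zero]
end
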